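/- Let V₀ > 0 and 0 < λ < √6, and set V(x) = V₀e^{−λx}. Define on (0, ∞): θ(t) = 6/(λ²t), σ(t) = 0, φ(t) = (2/λ)ln t + (1/λ)ln(V₀λ⁴/(2(6−λ²))), ψ(t) = 2/(λt). Then these functions satisfy the Einstein–Klein–Gordon evolution system with potential V, one has V(φ(t)) = 2(6−λ²)/(λ⁴t²), and the Bianchi I constraint σ² + V(φ) + ψ²/2 − θ²/3 = 0 holds identically. (This is the exact solution corresponding to the critical point P₂.) -/
import Mathlib


/-- For the exponential potential `V(x) = V₀·exp(−λx)` with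
`V₀ > 0` and `0 < λ < √6`, the functions `θ(t) = 6/(λ²t)`, `σ(t) = 0`,
`φ(t) = (2/λ)ln t + (1/λ)ln(V₀λ⁴/(2(6−λ²)))`, `ψ(t) = 2/(λt)` on `(0, ∞)`
satisfy the Einstein–Klein–Gordon evolution system (units `8πG = 1`), one has
`V(φ(t)) = 2(6−λ²)/(λ⁴t²)`, and the Bianchi I constraint
`σ² + V(φ) + ψ²/2 − θ²/3 = 0` holds identically. This is the exact solution
corresponding to the critical point `P₂`. -/
theorem exact_solution_P2
    (V₀ lam : ℝ) (hV₀ : 0 < V₀) (hlam : 0 < lam) (hlam6 : lam < Real.sqrt 6)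
    (V : ℝ → ℝ) (hV : ∀ x, V x = V₀ * Real.exp (-lam * x))
    (θ σ φ ψ : ℝ → ℝ)
    (hθ : ∀ t, θ t = 6 / (lam ^ 2 * t))
    (hσ : ∀ t, σ t = 0)
    (hφ : ∀ t, φ t = (2 / lam) * Real.log t
        + (1 / lam) * Real.log (V₀ * lam ^ 4 / (2 * (6 - lam ^ 2))))
    (hψ : ∀ t, ψ t = 2 / (lam * t)) :
    ∀ t ∈ Set.Ioi (0 : ℝ),
      HasDerivAt θ
        (-(1 / 3) * θ t ^ 2 - 2 * σ t ^ 2 + V (φ t) - ψ t ^ 2) t ∧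
      HasDerivAt σ
        (-θ t ^ 2 / (3 * Real.sqrt 3) - θ t * σ t + σ t ^ 2 / Real.sqrt 3
          + (1 / Real.sqrt 3) * (V (φ t) + ψ t ^ 2 / 2)) t ∧
      HasDerivAt φ (ψ t) t ∧
      HasDerivAt ψ (-θ t * ψ t - deriv V (φ t)) t ∧
      V (φ t) = 2 * (6 - lam ^ 2) / (lam ^ 4 * t ^ 2) ∧
      σ t ^ 2 + V (φ t) + ψ t ^ 2 / 2 - θ t ^ 2 / 3 = 0 := by
  have hl : lam ≠ 0 := ne_of_gt hlam
  have hl6 : lam ^ 2 < 6 := by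
    have := Real.sq_sqrt (by norm_num : (6:ℝ) ≥ 0)
    nlinarith [Real.sqrt_nonneg 6]
  have h6 : 0 < 6 - lam ^ 2 := by linarith
  have hC : 0 < V₀ * lam ^ 4 / (2 * (6 - lam ^ 2)) := by positivity
  have hs3 : Real.sqrt 3 ≠ 0 := by positivity
  have hderivV : ∀ x, deriv V x = -lam * (V₀ * Real.exp (-lam * x)) := by
    intro x
    have hVfun : V = fun x => V₀ * Real.exp (-lam * x) := funext hV
    rw [hVfun]
    have h1 : HasDerivAt (fun x => V₀ * Real.exp (-lam * x))
        (V₀ * (Real.exp (-lam * x) * -lam)) x := by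
      have h0 : HasDerivAt (fun x : ℝ => -lam * x) (-lam) x := by
        simpa using (hasDerivAt_id x).const_mul (-lam)
      exact h0.exp.const_mul V₀
    rw [h1.deriv]; ring
  intro t ht
  have ht0 : (0:ℝ) < t := ht
  have htne : t ≠ 0 := ne_of_gt ht0
  have hVφ : V (φ t) = 2 * (6 - lam ^ 2) / (lam ^ 4 * t ^ 2) := by
    have harg : -lam * φ t = -Real.log (t ^ 2 * (V₀ * lam ^ 4 / (2 * (6 - lam ^ 2)))) := by
      rw [hφ, Real.log_mul (by positivity) (ne_of_gt hC), Real.log_pow]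
      push_cast
      field_simp
    rw [hV, harg, Real.exp_neg, Real.exp_log (by positivity)]
    field_simp
  have hθ' : HasDerivAt θ (-(6 / lam ^ 2) * (t ^ 2)⁻¹) t := by
    have hfun : θ = fun t => 6 / lam ^ 2 * t⁻¹ := by
      funext s; rw [hθ]; ring
    rw [hfun]
    simpa [neg_mul, mul_comm] using (hasDerivAt_inv htne).const_mul (6 / lam ^ 2)
  have hσ' : HasDerivAt σ 0 t := by
    have hfun : σ = fun _ => (0:ℝ) := funext hσ
    rw [hfun]; exact hasDerivAt_const t 0
  have hφ' : HasDerivAt φ (2 / lam * t⁻¹) t := by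
    have hfun : φ = fun s => 2 / lam * Real.log s
        + 1 / lam * Real.log (V₀ * lam ^ 4 / (2 * (6 - lam ^ 2))) := funext hφ
    rw [hfun]
    exact ((Real.hasDerivAt_log htne).const_mul (2 / lam)).add_const _
  have hψ' : HasDerivAt ψ (-(2 / lam) * (t ^ 2)⁻¹) t := by
    have hfun : ψ = fun t => 2 / lam * t⁻¹ := by
      funext s; rw [hψ]; ring
    rw [hfun]
    simpa [neg_mul, mul_comm] using (hasDerivAt_inv htne).const_mul (2 / lam)
  refine ⟨?_, ?_, ?_, ?_, hVφ, ?_⟩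
  · convert hθ' using 1
    rw [hθ, hσ, hψ, hVφ]
    field_simp
    ring
  · convert hσ' using 1
    rw [hθ, hσ, hψ, hVφ]
    field_simp
    ring
  · convert hφ' using 1
    rw [hψ]; ring
  · convert hψ' using 1
    rw [hderivV (φ t), ← hV (φ t), hVφ, hθ, hψ]
    field_simp
    ring
  · rw [hθ, hσ, hψ, hVφ]
    field_simp
    ring
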